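/- arXiv:2503.20455 — 4 statements merged into one kernel-verified Lean document; each statement's English description precedes it below -/
import Mathlib

section
/- For every real R > 0, the function F(r) = 2π·sinh(R(1+ir))/(ir(1+ir)) − 2π·sinh(R(1−ir))/(ir(1−ir)), defined for complex r ∉ {0, i, −i}, tends to the value 4π·(R·cosh(R) − sinh(R)) as r → 0. -/
open Complex Filter Topology

/-!
With `w = i r` and `φ w = sinh (R (1 + w)) / (1 + w)`, the function is
`2π (φ w - φ (-w)) / w`, twice a symmetric difference quotient of `φ` at `0`; it therefore
tends to `4π φ'(0) = 4π (R cosh R - sinh R)`.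
-/

theorem HasDerivAt.tendsto_symmetric_slope_zero {𝕜 E : Type*} [NontriviallyNormedField 𝕜]
    [NormedAddCommGroup E] [NormedSpace 𝕜 E] {f : 𝕜 → E} {f' : E} {x : 𝕜}
    (hf : HasDerivAt f f' x) :
    Tendsto (fun t ↦ t⁻¹ • (f (x + t) - f (x - t))) (𝓝[≠] 0) (𝓝 ((2 : 𝕜) • f')) := by
  have hneg : Tendsto (fun t : 𝕜 ↦ -t) (𝓝[≠] 0) (𝓝[≠] 0) := by
    have h := (neg_nhdsNE (a := (0 : 𝕜))).le
    rwa [neg_zero] at h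
  have hright := hf.tendsto_slope_zero
  rw [two_smul]
  refine (hright.add (hright.comp hneg)).congr fun t ↦ ?_
  simp only [Function.comp_apply, inv_neg, neg_smul, smul_sub, ← sub_eq_add_neg]
  abel

theorem tendsto_const_mul_nhdsNE_zero {𝕜 : Type*} [NontriviallyNormedField 𝕜] {c : 𝕜}
    (hc : c ≠ 0) : Tendsto (c * ·) (𝓝[≠] 0) (𝓝[≠] 0) :=
  (((Homeomorph.mulLeft₀ c hc).map_punctured_nhds_eq 0).trans (by simp)).le

theorem hasDerivAt_sinh_mul_one_add_div_one_add (R : ℂ) :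
    HasDerivAt (fun w ↦ sinh (R * (1 + w)) / (1 + w)) (R * cosh R - sinh R) 0 := by
  have hlin : HasDerivAt (fun w : ℂ ↦ 1 + w) 1 0 := (hasDerivAt_id 0).const_add 1
  refine ((hlin.const_mul R).csinh.fun_div hlin (by norm_num)).congr_deriv ?_
  simp only [add_zero, mul_one, one_pow, div_one]
  ring

theorem selberg_transform_limit_at_zero_general (R : ℝ) :
    Filter.Tendsto
      (fun r : ℂ =>
        2 * (Real.pi : ℂ) * Complex.sinh ((R : ℂ) * (1 + Complex.I * r)) /
            (Complex.I * r * (1 + Complex.I * r))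
          - 2 * (Real.pi : ℂ) * Complex.sinh ((R : ℂ) * (1 - Complex.I * r)) /
            (Complex.I * r * (1 - Complex.I * r)))
      (𝓝[({0, Complex.I, -Complex.I} : Set ℂ)ᶜ] 0)
      (𝓝 ((4 * Real.pi * (R * Real.cosh R - Real.sinh R) : ℝ) : ℂ)) := by
  have hsym := (hasDerivAt_sinh_mul_one_add_div_one_add R).tendsto_symmetric_slope_zero
  have hlim := (hsym.comp (tendsto_const_mul_nhdsNE_zero I_ne_zero)).const_mul (2 * (Real.pi : ℂ))
  have hfilter : 𝓝[({0, I, -I} : Set ℂ)ᶜ] (0 : ℂ) ≤ 𝓝[≠] 0 :=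
    nhdsWithin_mono _ (Set.compl_subset_compl.mpr (by simp))
  convert hlim.mono_left hfilter using 2 with r
  · simp only [Function.comp_apply, smul_eq_mul, zero_add, zero_sub, ← sub_eq_add_neg,
      div_eq_mul_inv, mul_inv]
    ring
  · push_cast
    ring

/-- For `R > 0`, the closed-form Selberg transform
`F(r) = 2π sinh(R(1+ir))/(ir(1+ir)) − 2π sinh(R(1−ir))/(ir(1−ir))`, defined for
`r ∉ {0, i, −i}`, tends to `4π (R cosh R − sinh R)` as `r → 0`. -/
theorem selberg_transform_limit_at_zero (R : ℝ) (hR : 0 < R) :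
    Filter.Tendsto
      (fun r : ℂ =>
        2 * (Real.pi : ℂ) * Complex.sinh ((R : ℂ) * (1 + Complex.I * r)) /
            (Complex.I * r * (1 + Complex.I * r))
          - 2 * (Real.pi : ℂ) * Complex.sinh ((R : ℂ) * (1 - Complex.I * r)) /
            (Complex.I * r * (1 - Complex.I * r)))
      (𝓝[({0, Complex.I, -Complex.I} : Set ℂ)ᶜ] 0)
      (𝓝 ((4 * Real.pi * (R * Real.cosh R - Real.sinh R) : ℝ) : ℂ)) :=
  selberg_transform_limit_at_zero_general R
end

section
/- There exists an absolute constant C > 0 such that for every real R ≥ 1, every η ∈ (0,1), every sign s ∈ {+1, −1}, and every nonzero real r, one has |h_{R+sη}(r)·h_η(r)/(π(sinh(2η) − 2η))| ≤ C·R·e^R·min{1, 1/r², 1/(r⁴·η²)}. -/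
/-!
Two bounds on `h_ρ(r)` do all the work. The antiderivative
`∫₀^ρ sin(ru) sinh u du = (sin(rρ) cosh ρ − r cos(rρ) sinh ρ)/(1 + r²)` gives the decay
`|h_ρ(r)| ≤ 8πρe^ρ/(1 + r²)`, while `|sin(ru)| ≤ |r| u ≤ |r| sinh u` gives
`|h_ρ(r)| ≤ 4π∫₀^ρ sinh² u du = μ(B_ρ)`. So the normalized short factor `h_η/μ(B_η)` is at most `1`
and, as `μ(B_η) ≥ 4πη³/3`, at most `6e/(η²(1 + r²))`, while the long factor is
`O(R e^R/(1 + r²))`. Their product is bounded by each of the three terms of the minimum.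
-/

open MeasureTheory

/-- The Selberg transform of the indicator of a hyperbolic ball of radius `ρ` in `ℍ³`,
as a function of a real spectral parameter `r`. -/
noncomputable def hSel (ρ r : ℝ) : ℝ :=
  (4 * Real.pi / r) * ∫ u in (0:ℝ)..ρ, Real.sin (r * u) * Real.sinh u

/-- The smoothed Selberg transform `h_± = h_{R+sη} · h_η / μ(B_η)`,
where `μ(B_η) = π(sinh(2η) − 2η)`. -/
noncomputable def hPM (R η s r : ℝ) : ℝ :=
  hSel (R + s * η) r * hSel η r / (Real.pi * (Real.sinh (2 * η) - 2 * η))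

open Real

-- `μ(B_ρ)`: the volume element of `ℍ³` in geodesic polar coordinates is `4π sinh² u du`.
noncomputable def hypBallVolume (ρ : ℝ) : ℝ := π * (sinh (2 * ρ) - 2 * ρ)

lemma sinh_le_mul_cosh {x : ℝ} (hx : 0 ≤ x) : sinh x ≤ x * cosh x := by
  calc sinh x = ∫ t in (0:ℝ)..x, cosh t := by
        rw [intervalIntegral.integral_eq_sub_of_hasDerivAt (fun t _ => hasDerivAt_sinh t)
          (continuous_cosh.intervalIntegrable 0 x), sinh_zero, sub_zero]
    _ ≤ ∫ _ in (0:ℝ)..x, cosh x := by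
        refine intervalIntegral.integral_mono_on hx (continuous_cosh.intervalIntegrable 0 x)
          intervalIntegrable_const fun t ht => ?_
        rw [cosh_le_cosh, abs_of_nonneg ht.1, abs_of_nonneg hx]
        exact ht.2
    _ = x * cosh x := by simp

lemma cosh_le_exp {x : ℝ} (hx : 0 ≤ x) : cosh x ≤ exp x := by
  linarith [cosh_add_sinh x, sinh_nonneg_iff.2 hx]

lemma hypBallVolume_eq_integral (ρ : ℝ) :
    hypBallVolume ρ = 4 * π * ∫ u in (0:ℝ)..ρ, sinh u ^ 2 := by
  have hderiv (u : ℝ) : HasDerivAt hypBallVolume (4 * π * sinh u ^ 2) u := by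
    have hlin := (hasDerivAt_id u).const_mul 2
    refine ((hlin.sinh.sub hlin).const_mul π).congr_deriv ?_
    simp only [id, cosh_two_mul, cosh_sq]
    ring
  rw [← intervalIntegral.integral_const_mul, intervalIntegral.integral_eq_sub_of_hasDerivAt
    (fun u _ => hderiv u) (Continuous.intervalIntegrable (by fun_prop) _ _)]
  simp [hypBallVolume]

lemma cube_le_hypBallVolume {ρ : ℝ} (hρ : 0 ≤ ρ) : 4 * π / 3 * ρ ^ 3 ≤ hypBallVolume ρ := by
  have h : ∫ u in (0:ℝ)..ρ, u ^ 2 ≤ ∫ u in (0:ℝ)..ρ, sinh u ^ 2 :=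
    intervalIntegral.integral_mono_on hρ (Continuous.intervalIntegrable (by fun_prop) _ _)
      (Continuous.intervalIntegrable (by fun_prop) _ _) fun u hu =>
        pow_le_pow_left₀ hu.1 (self_le_sinh_iff.2 hu.1) 2
  rw [integral_pow] at h
  rw [hypBallVolume_eq_integral]
  nlinarith [pi_pos]

lemma hypBallVolume_pos {ρ : ℝ} (hρ : 0 < ρ) : 0 < hypBallVolume ρ :=
  (by positivity : (0:ℝ) < 4 * π / 3 * ρ ^ 3).trans_le (cube_le_hypBallVolume hρ.le)

lemma abs_hSel_le_of_abs_integral_le {ρ r M : ℝ} (hM : 0 ≤ M)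
    (h : |∫ u in (0:ℝ)..ρ, sin (r * u) * sinh u| ≤ |r| * M) : |hSel ρ r| ≤ 4 * π * M := by
  rcases eq_or_ne r 0 with rfl | hr
  · simp only [hSel, div_zero, zero_mul, abs_zero]
    positivity
  rw [hSel, abs_mul, abs_div, abs_of_pos (by positivity : (0:ℝ) < 4 * π)]
  calc 4 * π / |r| * |∫ u in (0:ℝ)..ρ, sin (r * u) * sinh u|
      ≤ 4 * π / |r| * (|r| * M) := by gcongr
    _ = 4 * π * M := by field_simp

lemma abs_hSel_le_hypBallVolume {ρ : ℝ} (r : ℝ) (hρ : 0 ≤ ρ) : |hSel ρ r| ≤ hypBallVolume ρ := by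
  rw [hypBallVolume_eq_integral]
  refine abs_hSel_le_of_abs_integral_le
    (intervalIntegral.integral_nonneg hρ fun u _ => sq_nonneg _) ?_
  rw [← intervalIntegral.integral_const_mul]
  refine (intervalIntegral.abs_integral_le_integral_abs hρ).trans
    (intervalIntegral.integral_mono_on hρ (Continuous.intervalIntegrable (by fun_prop) _ _)
      (Continuous.intervalIntegrable (by fun_prop) _ _) fun u hu => ?_)
  have hsin : |sin (r * u)| ≤ |r| * sinh u := by
    calc |sin (r * u)| ≤ |r * u| := abs_sin_le_abs
      _ = |r| * u := by rw [abs_mul, abs_of_nonneg hu.1]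
      _ ≤ |r| * sinh u := by gcongr; exact self_le_sinh_iff.2 hu.1
  rw [abs_mul, abs_of_nonneg (sinh_nonneg_iff.2 hu.1)]
  nlinarith [sinh_nonneg_iff.2 hu.1]

lemma integral_sin_mul_sinh (r ρ : ℝ) :
    ∫ u in (0:ℝ)..ρ, sin (r * u) * sinh u
      = (sin (r * ρ) * cosh ρ - r * cos (r * ρ) * sinh ρ) / (1 + r ^ 2) := by
  have hderiv (u : ℝ) : HasDerivAt
      (fun u => (sin (r * u) * cosh u - r * cos (r * u) * sinh u) / (1 + r ^ 2))
      (sin (r * u) * sinh u) u := by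
    have hru : HasDerivAt (fun u => r * u) r u := by simpa using (hasDerivAt_id u).const_mul r
    refine (((hru.sin.mul (hasDerivAt_cosh u)).sub
      ((hru.cos.const_mul r).mul (hasDerivAt_sinh u))).div_const _).congr_deriv ?_
    field_simp
    ring
  rw [intervalIntegral.integral_eq_sub_of_hasDerivAt (fun u _ => hderiv u)
    (Continuous.intervalIntegrable (by fun_prop) _ _)]
  simp

lemma abs_hSel_le_mul_exp (r : ℝ) {ρ : ℝ} (hρ : 0 ≤ ρ) :
    |hSel ρ r| ≤ 8 * π * (ρ * exp ρ) / (1 + r ^ 2) := by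
  have hsinh := sinh_le_mul_cosh hρ
  have hcosh := cosh_le_exp hρ
  have hnum : |sin (r * ρ) * cosh ρ - r * cos (r * ρ) * sinh ρ| ≤ |r| * (2 * (ρ * exp ρ)) := by
    calc |sin (r * ρ) * cosh ρ - r * cos (r * ρ) * sinh ρ|
        ≤ |sin (r * ρ)| * cosh ρ + |r| * |cos (r * ρ)| * sinh ρ := by
          refine (abs_sub _ _).trans_eq ?_
          rw [abs_mul, abs_mul, abs_mul, abs_of_pos (cosh_pos ρ),
            abs_of_nonneg (sinh_nonneg_iff.2 hρ)]
      _ ≤ (|r| * ρ) * cosh ρ + |r| * 1 * (ρ * cosh ρ) := by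
          gcongr
          · exact (abs_sin_le_abs).trans_eq (by rw [abs_mul, abs_of_nonneg hρ])
          · exact abs_cos_le_one _
      _ ≤ |r| * (2 * (ρ * exp ρ)) := by
          have := mul_le_mul_of_nonneg_left hcosh (mul_nonneg (abs_nonneg r) hρ)
          nlinarith
  have hint : |∫ u in (0:ℝ)..ρ, sin (r * u) * sinh u| ≤ |r| * (2 * (ρ * exp ρ) / (1 + r ^ 2)) := by
    rw [integral_sin_mul_sinh, abs_div, abs_of_pos (by positivity : (0:ℝ) < 1 + r ^ 2),
      ← mul_div_assoc]
    gcongr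
  calc |hSel ρ r| ≤ 4 * π * (2 * (ρ * exp ρ) / (1 + r ^ 2)) :=
        abs_hSel_le_of_abs_integral_le (by positivity) hint
    _ = 8 * π * (ρ * exp ρ) / (1 + r ^ 2) := by ring

lemma abs_hSel_le_of_le_add_one (r : ℝ) {R ρ : ℝ} (hR : 1 ≤ R) (hρ₀ : 0 ≤ ρ) (hρ : ρ ≤ R + 1) :
    |hSel ρ r| ≤ 16 * π * exp 1 * R * exp R / (1 + r ^ 2) := by
  have hgrowth : ρ * exp ρ ≤ 2 * R * (exp 1 * exp R) := by
    rw [← exp_add]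
    gcongr <;> linarith
  calc |hSel ρ r| ≤ 8 * π * (ρ * exp ρ) / (1 + r ^ 2) := abs_hSel_le_mul_exp r hρ₀
    _ ≤ 8 * π * (2 * R * (exp 1 * exp R)) / (1 + r ^ 2) := by gcongr
    _ = 16 * π * exp 1 * R * exp R / (1 + r ^ 2) := by ring

lemma abs_hSel_div_hypBallVolume_le (r : ℝ) {η : ℝ} (hη₀ : 0 < η) (hη₁ : η ≤ 1) :
    |hSel η r| / hypBallVolume η ≤ min 1 (6 * exp 1 / (η ^ 2 * (1 + r ^ 2))) := by
  have hvol := cube_le_hypBallVolume hη₀.le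
  have hvol_pos := hypBallVolume_pos hη₀
  refine le_min ((div_le_one hvol_pos).2 (abs_hSel_le_hypBallVolume r hη₀.le)) ?_
  rw [div_le_iff₀ hvol_pos]
  calc |hSel η r| ≤ 8 * π * (η * exp η) / (1 + r ^ 2) := abs_hSel_le_mul_exp r hη₀.le
    _ ≤ 8 * π * (η * exp 1) / (1 + r ^ 2) := by gcongr
    _ = 6 * exp 1 / (η ^ 2 * (1 + r ^ 2)) * (4 * π / 3 * η ^ 3) := by
        field_simp
        ring
    _ ≤ 6 * exp 1 / (η ^ 2 * (1 + r ^ 2)) * hypBallVolume η := by gcongr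

lemma div_one_add_sq_mul_min_le {K L η r : ℝ} (hK : 0 ≤ K) (hL : 1 ≤ L) (hη : 0 < η)
    (hr : r ≠ 0) :
    K / (1 + r ^ 2) * min 1 (L / (η ^ 2 * (1 + r ^ 2)))
      ≤ K * L * min (min 1 (1 / r ^ 2)) (1 / (r ^ 4 * η ^ 2)) := by
  have hr2 : 0 < r ^ 2 := by positivity
  have hKL : K ≤ K * L := le_mul_of_one_le_right hK hL
  have hfirst : K / (1 + r ^ 2) * min 1 (L / (η ^ 2 * (1 + r ^ 2))) ≤ K / (1 + r ^ 2) :=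
    mul_le_of_le_one_right (by positivity) (min_le_left _ _)
  have hKL₀ : 0 ≤ K * L := hK.trans hKL
  rw [mul_min_of_nonneg _ _ hKL₀, mul_min_of_nonneg _ _ hKL₀]
  refine le_min (le_min ?_ ?_) ?_
  · calc _ ≤ K / (1 + r ^ 2) := hfirst
      _ ≤ K := div_le_self hK (by linarith)
      _ ≤ K * L * 1 := by rwa [mul_one]
  · calc _ ≤ K / (1 + r ^ 2) := hfirst
      _ ≤ K * L / r ^ 2 := div_le_div₀ (by positivity) hKL hr2 (by linarith)
      _ = K * L * (1 / r ^ 2) := by ring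
  · calc _ ≤ K / (1 + r ^ 2) * (L / (η ^ 2 * (1 + r ^ 2))) :=
          mul_le_mul_of_nonneg_left (min_le_right _ _) (by positivity)
      _ = K * L / (η ^ 2 * (1 + r ^ 2) ^ 2) := by rw [div_mul_div_comm]; ring
      _ ≤ K * L / (r ^ 4 * η ^ 2) :=
          div_le_div_of_nonneg_left hKL₀ (by positivity) (by nlinarith [sq_nonneg η])
      _ = K * L * (1 / (r ^ 4 * η ^ 2)) := by ring

/-- Uniform bound `|h_±(r)| ≤ C R e^R min{1, 1/r², 1/(r⁴η²)}` for `R ≥ 1`, `η ∈ (0,1)`,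
sign `s = ±1`, and nonzero real `r`. -/
theorem hPM_min_bound :
    ∃ C : ℝ, 0 < C ∧ ∀ R : ℝ, 1 ≤ R → ∀ η : ℝ, 0 < η → η < 1 →
      ∀ s : ℝ, (s = 1 ∨ s = -1) → ∀ r : ℝ, r ≠ 0 →
        |hPM R η s r|
          ≤ C * R * Real.exp R *
              min (min 1 (1 / r ^ 2)) (1 / (r ^ 4 * η ^ 2)) := by
  refine ⟨96 * π * exp 1 ^ 2, by positivity, fun R hR η hη₀ hη₁ s hs r hr => ?_⟩
  have hρ : 0 ≤ R + s * η ∧ R + s * η ≤ R + 1 := by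
    rcases hs with rfl | rfl <;> constructor <;> linarith
  have hK : 0 ≤ 16 * π * exp 1 * R * exp R := by positivity
  have hL : 1 ≤ 6 * exp 1 := by linarith [add_one_le_exp 1]
  have hvol := hypBallVolume_pos hη₀
  calc |hPM R η s r| = |hSel (R + s * η) r| * (|hSel η r| / hypBallVolume η) := by
        rw [show hPM R η s r = hSel (R + s * η) r * (hSel η r / hypBallVolume η) from
          mul_div_assoc .., abs_mul, abs_div, abs_of_pos hvol]
    _ ≤ 16 * π * exp 1 * R * exp R / (1 + r ^ 2) * min 1 (6 * exp 1 / (η ^ 2 * (1 + r ^ 2))) :=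
        mul_le_mul (abs_hSel_le_of_le_add_one r hR hρ.1 hρ.2)
          (abs_hSel_div_hypBallVolume_le r hη₀ hη₁.le) (div_nonneg (abs_nonneg _) hvol.le)
          (by positivity)
    _ ≤ 16 * π * exp 1 * R * exp R * (6 * exp 1) *
          min (min 1 (1 / r ^ 2)) (1 / (r ^ 4 * η ^ 2)) :=
        div_one_add_sq_mul_min_le hK hL hη₀ hr
    _ = 96 * π * exp 1 ^ 2 * R * exp R * min (min 1 (1 / r ^ 2)) (1 / (r ^ 4 * η ^ 2)) := by
        ring
end

section
/- There exists an absolute constant C > 0 such that for every real R ≥ 1, every η ∈ (0,1), and every sign s ∈ {+1,−1}, there exist continuously differentiable functions A, B : [1,∞) → ℂ satisfying, for all real r ≥ 1: h_±(r) = A(r)·e^{i r(R+sη)} + B(r)·e^{−i r(R+sη)}, together with the bounds |A(r)|, |B(r)| ≤ C·e^R·r^{−2}·min{1, (η r)^{−2}} and |A′(r)|, |B′(r)| ≤ C·e^R·r^{−3}·min{1, (η r)^{−1}}. -/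
open MeasureTheory

/-!
Write `I_ρ(r) = ∫₀^ρ sin(ru) sinh u du`, so that `h_ρ(r) = 4π I_ρ(r) / r`. Differentiating
`sin(ru) cosh u - r cos(ru) sinh u` gives the closed form
`(1 + r²) I_ρ(r) = sin(rρ) cosh ρ - r cos(rρ) sinh ρ = 2 Re (w(r) e^{irρ})` with
`w(r) = -(i cosh ρ + r sinh ρ) / 2`, hence `h_± = 2 Re (φ w e^{irρ})` for the real factor
`φ(r) = 16π² I_η(r) / (μ(B_η) r² (1 + r²))`; take `A = φ w` and `B = conj A`.
As `|w| ≤ r e^ρ / 2` and `μ(B_η) ≥ 4πη³/3`, everything reduces to bounding `I_η` and its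
`r`-derivative `∫₀^η u cos(ru) sinh u du`. For `ηr ≤ 1` the integrands are estimated
directly (`|sin x| ≤ |x|`, `|sinh u| ≤ 2|u|`); for `ηr ≥ 1` one integration by parts against
the oscillating factor gains the missing power of `ηr`.
-/

open Real Set

lemma Real.cosh_le_two {x : ℝ} (hx : |x| ≤ 1) : cosh x ≤ 2 := by
  have hsq : exp (1 / 2) * exp (1 / 2) = exp 1 := by rw [← exp_add]; norm_num
  have hx2 : x ^ 2 / 2 ≤ 1 / 2 := by nlinarith [sq_abs x, abs_nonneg x]
  calc cosh x ≤ exp (x ^ 2 / 2) := cosh_le_exp_half_sq x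
    _ ≤ exp (1 / 2) := exp_le_exp.2 hx2
    _ ≤ 2 := by nlinarith [exp_one_lt_d9, exp_pos (1 / 2)]

lemma Real.abs_sinh_le_two_mul_abs {x : ℝ} (hx : |x| ≤ 1) : |sinh x| ≤ 2 * |x| := by
  have h₁ := abs_exp_sub_one_le hx
  have h₂ := abs_exp_sub_one_le (x := -x) (by rwa [abs_neg])
  rw [abs_neg] at h₂
  rw [sinh_eq, show (exp x - exp (-x)) / 2 = ((exp x - 1) - (exp (-x) - 1)) / 2 by ring,
    abs_div, abs_two]
  linarith [abs_sub (exp x - 1) (exp (-x) - 1)]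

lemma Real.add_pow_three_div_six_le_sinh {x : ℝ} (hx : 0 ≤ x) : x + x ^ 3 / 6 ≤ sinh x := by
  have h := sum_le_hasSum (Finset.range 2) (fun n _ ↦ by positivity) (hasSum_sinh x)
  norm_num [Finset.sum_range_succ, Nat.factorial] at h
  linarith

noncomputable def ballVolume (η : ℝ) : ℝ := π * (sinh (2 * η) - 2 * η)

lemma four_mul_pi_mul_pow_three_div_three_le_ballVolume {η : ℝ} (hη : 0 ≤ η) :
    4 * π * η ^ 3 / 3 ≤ ballVolume η := by
  rw [ballVolume]
  have h := add_pow_three_div_six_le_sinh (x := 2 * η) (by positivity)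
  nlinarith [pi_pos]

lemma ballVolume_pos {η : ℝ} (hη : 0 < η) : 0 < ballVolume η :=
  lt_of_lt_of_le (by positivity) (four_mul_pi_mul_pow_three_div_three_le_ballVolume hη.le)

lemma sixteen_mul_pi_sq_div_ballVolume_le {η : ℝ} (hη : 0 < η) :
    16 * π ^ 2 / ballVolume η ≤ 12 * π / η ^ 3 := by
  have h := four_mul_pi_mul_pow_three_div_three_le_ballVolume hη.le
  rw [div_le_div_iff₀ (ballVolume_pos hη) (by positivity)]
  nlinarith [pi_pos, pow_pos hη 3]

lemma min_one_one_div_sq_le {x : ℝ} (hx : 0 < x) : min 1 (1 / x ^ 2) ≤ min 1 (1 / x) := by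
  rcases le_total x 1 with h | h
  · exact (min_le_left _ _).trans (le_min le_rfl (one_le_one_div hx h))
  · refine min_le_min_left _ (one_div_le_one_div_of_le hx ?_)
    nlinarith

lemma abs_integral_mul_deriv_le {f f' G g : ℝ → ℝ} {a b M M' K : ℝ} (hab : a ≤ b)
    (hf : ∀ x ∈ uIcc a b, HasDerivAt f (f' x) x) (hG : ∀ x ∈ uIcc a b, HasDerivAt G (g x) x)
    (hf' : IntervalIntegrable f' volume a b) (hg : IntervalIntegrable g volume a b)
    (hfM : ∀ x ∈ Icc a b, |f x| ≤ M) (hf'M : ∀ x ∈ Icc a b, |f' x| ≤ M')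
    (hGK : ∀ x ∈ Icc a b, |G x| ≤ K) :
    |∫ x in a..b, f x * g x| ≤ K * (2 * M + M' * (b - a)) := by
  have ha : a ∈ Icc a b := left_mem_Icc.2 hab
  have hb : b ∈ Icc a b := right_mem_Icc.2 hab
  have hK : 0 ≤ K := (abs_nonneg _).trans (hGK a ha)
  have hM : 0 ≤ M := (abs_nonneg _).trans (hfM a ha)
  have hint : |∫ x in a..b, f' x * G x| ≤ M' * K * (b - a) := by
    have := intervalIntegral.norm_integral_le_of_norm_le_const (a := a) (b := b)
      (C := M' * K) (f := fun x ↦ f' x * G x) fun x hx ↦ by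
        have hx' : x ∈ Icc a b := Ioc_subset_Icc_self (uIoc_of_le hab ▸ hx)
        rw [Real.norm_eq_abs, abs_mul]
        exact mul_le_mul (hf'M x hx') (hGK x hx') (abs_nonneg _)
          ((abs_nonneg _).trans (hf'M x hx'))
    rwa [abs_of_nonneg (sub_nonneg.2 hab)] at this
  have hend : ∀ x ∈ Icc a b, |f x * G x| ≤ M * K := fun x hx ↦ by
    rw [abs_mul]; exact mul_le_mul (hfM x hx) (hGK x hx) (abs_nonneg _) hM
  rw [intervalIntegral.integral_mul_deriv_eq_deriv_mul hf hG hf' hg]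
  have := abs_sub (f b * G b - f a * G a) (∫ x in a..b, f' x * G x)
  have := abs_sub (f b * G b) (f a * G a)
  linarith [hend a ha, hend b hb]

noncomputable def sinSinhIntegral (ρ r : ℝ) : ℝ := ∫ u in (0:ℝ)..ρ, sin (r * u) * sinh u

noncomputable def sinSinhIntegralDeriv (ρ r : ℝ) : ℝ :=
  ∫ u in (0:ℝ)..ρ, u * cos (r * u) * sinh u

lemma one_add_sq_mul_sinSinhIntegral (ρ r : ℝ) :
    (1 + r ^ 2) * sinSinhIntegral ρ r = sin (r * ρ) * cosh ρ - r * cos (r * ρ) * sinh ρ := by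
  have hderiv : ∀ u ∈ uIcc 0 ρ, HasDerivAt
      (fun u ↦ (sin (r * u) * cosh u - r * cos (r * u) * sinh u) / (1 + r ^ 2))
      (sin (r * u) * sinh u) u := fun u _ ↦ by
    have hs := ((hasDerivAt_id u).const_mul r).sin
    have hc := ((hasDerivAt_id u).const_mul r).cos
    refine (((hs.mul (hasDerivAt_cosh u)).sub
      ((hc.const_mul r).mul (hasDerivAt_sinh u))).div_const (1 + r ^ 2)).congr_deriv ?_
    simp only [id]
    field_simp
    ring
  rw [sinSinhIntegral, intervalIntegral.integral_eq_sub_of_hasDerivAt hderiv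
    (by apply Continuous.intervalIntegrable; fun_prop)]
  simp only [mul_zero, sin_zero, cos_zero, sinh_zero, cosh_zero]
  field_simp
  ring

lemma hasDerivAt_sinSinhIntegral (ρ r : ℝ) :
    HasDerivAt (sinSinhIntegral ρ) (sinSinhIntegralDeriv ρ r) r := by
  have hbound : ∀ x : ℝ, ∀ u : ℝ, ‖u * cos (x * u) * sinh u‖ ≤ |u * sinh u| := fun x u ↦ by
    rw [Real.norm_eq_abs, mul_right_comm, abs_mul]
    exact mul_le_of_le_one_right (abs_nonneg _) (abs_cos_le_one _)
  have hderiv : ∀ x u : ℝ, HasDerivAt (fun x ↦ sin (x * u) * sinh u)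
      (u * cos (x * u) * sinh u) x := fun x u ↦ by
    refine ((((hasDerivAt_id x).mul_const u).sin).mul_const (sinh u)).congr_deriv ?_
    simp only [id]
    ring
  exact (intervalIntegral.hasDerivAt_integral_of_dominated_loc_of_deriv_le (s := univ)
    (bound := fun u ↦ |u * sinh u|) Filter.univ_mem
    (Filter.Eventually.of_forall fun x ↦ (by fun_prop : Continuous _).aestronglyMeasurable)
    (by apply Continuous.intervalIntegrable; fun_prop)
    (by fun_prop : Continuous _).aestronglyMeasurable
    (Filter.Eventually.of_forall fun u _ x _ ↦ hbound x u)
    (by apply Continuous.intervalIntegrable; fun_prop)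
    (Filter.Eventually.of_forall fun u _ x _ ↦ hderiv x u)).2

lemma continuous_sinSinhIntegralDeriv (ρ : ℝ) : Continuous (sinSinhIntegralDeriv ρ) :=
  intervalIntegral.continuous_parametric_intervalIntegral_of_continuous'
    (f := fun r u ↦ u * cos (r * u) * sinh u) (by fun_prop) 0 ρ

lemma abs_sinh_le_of_mem_Icc {η u : ℝ} (hη₁ : η ≤ 1) (hu : u ∈ Icc 0 η) :
    |sinh u| ≤ 2 * η := by
  have hu' : |u| ≤ η := abs_le.2 ⟨by linarith [hu.1, hu.2], hu.2⟩
  linarith [abs_sinh_le_two_mul_abs (hu'.trans hη₁)]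

lemma abs_sinSinhIntegral_le_of_le {η r : ℝ} (hη₀ : 0 ≤ η) (hη₁ : η ≤ 1) (hr : 0 ≤ r) :
    |sinSinhIntegral η r| ≤ 2 * r * η ^ 3 := by
  have h := intervalIntegral.norm_integral_le_of_norm_le_const (a := 0) (b := η)
    (C := r * η * (2 * η)) (f := fun u ↦ sin (r * u) * sinh u) fun u hu ↦ by
      have hu' : u ∈ Icc 0 η := Ioc_subset_Icc_self (uIoc_of_le hη₀ ▸ hu)
      rw [Real.norm_eq_abs, abs_mul]
      refine mul_le_mul ((abs_sin_le_abs).trans ?_) (abs_sinh_le_of_mem_Icc hη₁ hu')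
        (abs_nonneg _) (by positivity)
      rw [abs_mul, abs_of_nonneg hr, abs_of_nonneg hu'.1]
      exact mul_le_mul_of_nonneg_left hu'.2 hr
  rw [Real.norm_eq_abs, sub_zero, abs_of_nonneg hη₀] at h
  exact h.trans_eq (by ring)

lemma abs_sinSinhIntegral_le_of_pos {η r : ℝ} (hη₀ : 0 ≤ η) (hη₁ : η ≤ 1) (hr : 0 < r) :
    |sinSinhIntegral η r| ≤ 6 * η / r := by
  have h := abs_integral_mul_deriv_le (f := sinh) (f' := cosh) (G := fun u ↦ -cos (r * u) / r)
    (g := fun u ↦ sin (r * u)) (M := 2 * η) (M' := 2) (K := 1 / r) hη₀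
    (fun u _ ↦ hasDerivAt_sinh u)
    (fun u _ ↦ ((((hasDerivAt_id u).const_mul r).cos.neg).div_const r).congr_deriv
      (by simp only [id]; field_simp))
    (by apply Continuous.intervalIntegrable; fun_prop)
    (by apply Continuous.intervalIntegrable; fun_prop)
    (fun u hu ↦ abs_sinh_le_of_mem_Icc hη₁ hu)
    (fun u hu ↦ by
      rw [abs_of_nonneg (zero_le_one.trans (one_le_cosh u))]
      exact cosh_le_two (abs_le.2 ⟨by linarith [hu.1], hu.2.trans hη₁⟩))
    (fun u _ ↦ by
      rw [abs_div, abs_neg, abs_of_pos hr]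
      exact div_le_div_of_nonneg_right (abs_cos_le_one _) hr.le)
  simp only [sinSinhIntegral, mul_comm (sin _)]
  exact h.trans_eq (by field_simp; ring)

lemma abs_sinSinhIntegralDeriv_le_of_le {η : ℝ} (hη₀ : 0 ≤ η) (hη₁ : η ≤ 1) (r : ℝ) :
    |sinSinhIntegralDeriv η r| ≤ 2 * η ^ 3 := by
  have h := intervalIntegral.norm_integral_le_of_norm_le_const (a := 0) (b := η)
    (C := η * (2 * η)) (f := fun u ↦ u * cos (r * u) * sinh u) fun u hu ↦ by
      have hu' : u ∈ Icc 0 η := Ioc_subset_Icc_self (uIoc_of_le hη₀ ▸ hu)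
      rw [Real.norm_eq_abs, abs_mul, abs_mul, abs_of_nonneg hu'.1]
      have hcos := mul_le_mul hu'.2 (abs_cos_le_one (r * u)) (abs_nonneg _) hη₀
      rw [mul_one] at hcos
      exact mul_le_mul hcos (abs_sinh_le_of_mem_Icc hη₁ hu') (abs_nonneg _) hη₀
  rw [Real.norm_eq_abs, sub_zero, abs_of_nonneg hη₀] at h
  exact h.trans_eq (by ring)

lemma abs_sinSinhIntegralDeriv_le_of_pos {η r : ℝ} (hη₀ : 0 ≤ η) (hη₁ : η ≤ 1) (hr : 0 < r) :
    |sinSinhIntegralDeriv η r| ≤ 8 * η ^ 2 / r := by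
  have hcosh : ∀ u ∈ Icc 0 η, |cosh u| ≤ 2 := fun u hu ↦ by
    rw [abs_of_nonneg (zero_le_one.trans (one_le_cosh u))]
    exact cosh_le_two (abs_le.2 ⟨by linarith [hu.1], hu.2.trans hη₁⟩)
  have h := abs_integral_mul_deriv_le (f := fun u ↦ u * sinh u)
    (f' := fun u ↦ sinh u + u * cosh u) (G := fun u ↦ sin (r * u) / r) (g := fun u ↦ cos (r * u))
    (M := η * (2 * η)) (M' := 4 * η) (K := 1 / r) hη₀
    (fun u _ ↦ ((hasDerivAt_id u).mul (hasDerivAt_sinh u)).congr_deriv (by simp))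
    (fun u _ ↦ ((((hasDerivAt_id u).const_mul r).sin).div_const r).congr_deriv
      (by simp only [id]; field_simp))
    (by apply Continuous.intervalIntegrable; fun_prop)
    (by apply Continuous.intervalIntegrable; fun_prop)
    (fun u hu ↦ by
      rw [abs_mul, abs_of_nonneg hu.1]
      exact mul_le_mul hu.2 (abs_sinh_le_of_mem_Icc hη₁ hu) (abs_nonneg _) hη₀)
    (fun u hu ↦ by
      have := abs_add_le (sinh u) (u * cosh u)
      rw [abs_mul, abs_of_nonneg hu.1] at this
      nlinarith [abs_sinh_le_of_mem_Icc hη₁ hu, hcosh u hu, hu.2, abs_nonneg (cosh u)])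
    (fun u _ ↦ by
      rw [abs_div, abs_of_pos hr]
      exact div_le_div_of_nonneg_right (abs_sin_le_one _) hr.le)
  simp only [sinSinhIntegralDeriv, mul_right_comm _ (cos _)]
  exact h.trans_eq (by field_simp; ring)

lemma abs_sinSinhIntegral_le {η r : ℝ} (hη₀ : 0 < η) (hη₁ : η ≤ 1) (hr : 0 < r) :
    |sinSinhIntegral η r| ≤ 6 * r * η ^ 3 * min 1 (1 / (η * r) ^ 2) := by
  rw [mul_min_of_nonneg _ _ (by positivity), mul_one]
  refine le_min ((abs_sinSinhIntegral_le_of_le hη₀.le hη₁ hr.le).trans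
    (by nlinarith [pow_pos hη₀ 3])) ?_
  exact (abs_sinSinhIntegral_le_of_pos hη₀.le hη₁ hr).trans_eq (by field_simp)

lemma abs_sinSinhIntegralDeriv_le {η r : ℝ} (hη₀ : 0 < η) (hη₁ : η ≤ 1) (hr : 0 < r) :
    |sinSinhIntegralDeriv η r| ≤ 8 * η ^ 3 * min 1 (1 / (η * r)) := by
  rw [mul_min_of_nonneg _ _ (by positivity), mul_one]
  refine le_min ((abs_sinSinhIntegralDeriv_le_of_le hη₀.le hη₁ r).trans
    (by nlinarith [pow_pos hη₀ 3])) ?_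
  exact (abs_sinSinhIntegralDeriv_le_of_pos hη₀.le hη₁ hr).trans_eq (by field_simp)

noncomputable def envelope (η r : ℝ) : ℝ :=
  16 * π ^ 2 / ballVolume η * (sinSinhIntegral η r / (r ^ 2 + r ^ 4))

noncomputable def envelopeDeriv (η r : ℝ) : ℝ :=
  16 * π ^ 2 / ballVolume η *
    (sinSinhIntegralDeriv η r / (r ^ 2 + r ^ 4)
      - sinSinhIntegral η r * (2 * r + 4 * r ^ 3) / (r ^ 2 + r ^ 4) ^ 2)

lemma hSel_mul_hSel_div_eq {ρ η r : ℝ} (hr : r ≠ 0) :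
    hSel ρ r * hSel η r / ballVolume η
      = envelope η r * (sin (r * ρ) * cosh ρ - r * cos (r * ρ) * sinh ρ) := by
  rw [← one_add_sq_mul_sinSinhIntegral, envelope]
  unfold hSel
  rw [← sinSinhIntegral, ← sinSinhIntegral]
  field_simp
  ring

lemma hasDerivAt_envelope (η : ℝ) {r : ℝ} (hr : r ≠ 0) :
    HasDerivAt (envelope η) (envelopeDeriv η r) r := by
  have hq : HasDerivAt (fun r : ℝ ↦ r ^ 2 + r ^ 4) (2 * r + 4 * r ^ 3) r := by
    refine (((hasDerivAt_id r).pow 2).add ((hasDerivAt_id r).pow 4)).congr_deriv ?_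
    simp only [id]; ring
  refine (((hasDerivAt_sinSinhIntegral η r).div hq (by positivity)).const_mul _).congr_deriv ?_
  rw [envelopeDeriv]
  field_simp

lemma continuousOn_envelopeDeriv (η : ℝ) : ContinuousOn (envelopeDeriv η) {0}ᶜ := by
  have hI : Continuous (sinSinhIntegral η) :=
    continuous_iff_continuousAt.2 fun r ↦ (hasDerivAt_sinSinhIntegral η r).continuousAt
  have hJ := continuous_sinSinhIntegralDeriv η
  unfold envelopeDeriv
  refine continuousOn_const.mul ((hJ.continuousOn.div (by fun_prop) fun r hr ↦ ?_).sub
    ((hI.continuousOn.mul (by fun_prop)).div (by fun_prop) fun r hr ↦ ?_))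
  all_goals
    have : r ≠ 0 := hr
    positivity

lemma abs_envelope_le {η r : ℝ} (hη₀ : 0 < η) (hη₁ : η ≤ 1) (hr : 1 ≤ r) :
    |envelope η r| ≤ 72 * π / r ^ 3 * min 1 (1 / (η * r) ^ 2) := by
  have hr₀ : 0 < r := one_pos.trans_le hr
  have hμ := sixteen_mul_pi_sq_div_ballVolume_le hη₀
  have hI := abs_sinSinhIntegral_le hη₀ hη₁ hr₀
  have hq : r ^ 4 ≤ r ^ 2 + r ^ 4 := by nlinarith [sq_nonneg r]
  rw [envelope, abs_mul, abs_of_pos (div_pos (by positivity) (ballVolume_pos hη₀)), abs_div,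
    abs_of_pos (by positivity : 0 < r ^ 2 + r ^ 4)]
  calc _ ≤ 12 * π / η ^ 3 * (6 * r * η ^ 3 * min 1 (1 / (η * r) ^ 2) / r ^ 4) := by
        gcongr
    _ = _ := by field_simp; ring

lemma abs_envelopeDeriv_le {η r : ℝ} (hη₀ : 0 < η) (hη₁ : η ≤ 1) (hr : 1 ≤ r) :
    |envelopeDeriv η r| ≤ 528 * π / r ^ 4 * min 1 (1 / (η * r)) := by
  have hr₀ : 0 < r := one_pos.trans_le hr
  have hμ := sixteen_mul_pi_sq_div_ballVolume_le hη₀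
  have hI := abs_sinSinhIntegral_le hη₀ hη₁ hr₀
  have hJ := abs_sinSinhIntegralDeriv_le hη₀ hη₁ hr₀
  have hm := min_one_one_div_sq_le (mul_pos hη₀ hr₀)
  have hq : r ^ 4 ≤ r ^ 2 + r ^ 4 := by nlinarith [sq_nonneg r]
  have hq' : (2 * r + 4 * r ^ 3) / (r ^ 2 + r ^ 4) ^ 2 ≤ 6 / r ^ 5 := by
    rw [div_le_div_iff₀ (by positivity) (by positivity)]
    nlinarith [pow_le_pow_right₀ hr (by norm_num : 6 ≤ 8), pow_nonneg hr₀.le 4,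
      pow_nonneg hr₀.le 6, pow_nonneg hr₀.le 8]
  have htri : |sinSinhIntegralDeriv η r / (r ^ 2 + r ^ 4)
        - sinSinhIntegral η r * (2 * r + 4 * r ^ 3) / (r ^ 2 + r ^ 4) ^ 2|
      ≤ |sinSinhIntegralDeriv η r| / (r ^ 2 + r ^ 4)
        + |sinSinhIntegral η r| * ((2 * r + 4 * r ^ 3) / (r ^ 2 + r ^ 4) ^ 2) := by
    refine (abs_sub _ _).trans_eq ?_
    rw [abs_div, mul_div_assoc, abs_mul, abs_of_pos (by positivity : 0 < r ^ 2 + r ^ 4),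
      abs_of_pos (by positivity : 0 < (2 * r + 4 * r ^ 3) / (r ^ 2 + r ^ 4) ^ 2)]
  rw [envelopeDeriv, abs_mul, abs_of_pos (div_pos (by positivity) (ballVolume_pos hη₀))]
  calc _ ≤ 12 * π / η ^ 3 * (8 * η ^ 3 * min 1 (1 / (η * r)) / r ^ 4
          + 6 * r * η ^ 3 * min 1 (1 / (η * r) ^ 2) * (6 / r ^ 5)) := by
        gcongr
        exact htri.trans (by gcongr)
    _ = 12 * π * (8 * min 1 (1 / (η * r)) + 36 * min 1 (1 / (η * r) ^ 2)) / r ^ 4 := by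
        field_simp; ring
    _ ≤ 12 * π * (8 * min 1 (1 / (η * r)) + 36 * min 1 (1 / (η * r))) / r ^ 4 := by gcongr
    _ = _ := by ring

open Complex in
noncomputable def amplitude (ρ r : ℝ) : ℂ := -(I * Real.cosh ρ + r * Real.sinh ρ) / 2

lemma hasDerivAt_amplitude (ρ r : ℝ) :
    HasDerivAt (amplitude ρ) (-(sinh ρ : ℂ) / 2) r := by
  refine ((((hasDerivAt_id (r : ℂ)).comp_ofReal.mul_const (sinh ρ : ℂ)).const_add
    (Complex.I * cosh ρ)).neg.div_const 2).congr_deriv ?_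
  simp

lemma norm_amplitude_le {ρ r : ℝ} (hρ : 0 ≤ ρ) (hr : 1 ≤ r) :
    ‖amplitude ρ r‖ ≤ r * exp ρ / 2 := by
  have hsinh : 0 ≤ sinh ρ := sinh_nonneg_iff.2 hρ
  have hcosh : 0 ≤ cosh ρ := zero_le_one.trans (one_le_cosh ρ)
  rw [amplitude, norm_div, norm_neg, Complex.norm_two, ← cosh_add_sinh]
  gcongr
  refine (norm_add_le _ _).trans ?_
  rw [norm_mul, norm_mul, Complex.norm_I, Complex.norm_real, Complex.norm_real, Complex.norm_real,
    Real.norm_of_nonneg hcosh, Real.norm_of_nonneg hsinh,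
    Real.norm_of_nonneg (zero_le_one.trans hr)]
  nlinarith

lemma ofReal_sin_mul_cosh_sub_eq (ρ r : ℝ) :
    ((sin (r * ρ) * cosh ρ - r * cos (r * ρ) * sinh ρ : ℝ) : ℂ)
      = amplitude ρ r * Complex.exp (Complex.I * r * ρ)
        + (starRingEnd ℂ) (amplitude ρ r) * Complex.exp (-(Complex.I * r * ρ)) := by
  have hconj : (starRingEnd ℂ) (amplitude ρ r) = (Complex.I * cosh ρ - r * sinh ρ) / 2 := by
    simp only [amplitude, map_div₀, map_neg, map_add, map_mul, Complex.conj_I,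
      Complex.conj_ofReal, map_ofNat]
    ring
  have harg : Complex.I * r * ρ = ((r * ρ : ℝ) : ℂ) * Complex.I := by push_cast; ring
  rw [hconj, amplitude, harg, ← neg_mul, ← Complex.ofReal_neg, Complex.exp_mul_I,
    Complex.exp_mul_I, ← Complex.ofReal_cos, ← Complex.ofReal_sin, ← Complex.ofReal_cos,
    ← Complex.ofReal_sin, cos_neg, sin_neg]
  push_cast
  linear_combination Complex.cosh ρ * Complex.sin (r * ρ) * Complex.I_sq

noncomputable def oscCoeff (η ρ r : ℝ) : ℂ := envelope η r * amplitude ρ r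

noncomputable def oscCoeffDeriv (η ρ r : ℝ) : ℂ :=
  envelopeDeriv η r * amplitude ρ r + envelope η r * (-(sinh ρ : ℂ) / 2)

lemma hasDerivAt_oscCoeff (η ρ : ℝ) {r : ℝ} (hr : r ≠ 0) :
    HasDerivAt (oscCoeff η ρ) (oscCoeffDeriv η ρ r) r :=
  (hasDerivAt_envelope η hr).ofReal_comp.mul (hasDerivAt_amplitude ρ r)

lemma continuousOn_oscCoeffDeriv (η ρ : ℝ) : ContinuousOn (oscCoeffDeriv η ρ) {0}ᶜ := by
  have henv : ContinuousOn (envelope η) {0}ᶜ := fun r hr ↦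
    (hasDerivAt_envelope η hr).continuousAt.continuousWithinAt
  have hamp : Continuous (amplitude ρ) :=
    continuous_iff_continuousAt.2 fun r ↦ (hasDerivAt_amplitude ρ r).continuousAt
  exact ((Complex.continuous_ofReal.comp_continuousOn (continuousOn_envelopeDeriv η)).mul
    hamp.continuousOn).add
    ((Complex.continuous_ofReal.comp_continuousOn henv).mul continuousOn_const)

lemma norm_oscCoeff_le {η ρ r : ℝ} (hη₀ : 0 < η) (hη₁ : η ≤ 1) (hρ : 0 ≤ ρ)
    (hr : 1 ≤ r) :
    ‖oscCoeff η ρ r‖ ≤ 36 * π * exp ρ / r ^ 2 * min 1 (1 / (η * r) ^ 2) := by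
  have hr₀ : 0 < r := one_pos.trans_le hr
  rw [oscCoeff, norm_mul, Complex.norm_real, Real.norm_eq_abs]
  calc _ ≤ 72 * π / r ^ 3 * min 1 (1 / (η * r) ^ 2) * (r * exp ρ / 2) :=
        mul_le_mul (abs_envelope_le hη₀ hη₁ hr) (norm_amplitude_le hρ hr) (norm_nonneg _)
          (by positivity)
    _ = _ := by field_simp; ring

lemma norm_oscCoeffDeriv_le {η ρ r : ℝ} (hη₀ : 0 < η) (hη₁ : η ≤ 1) (hρ : 0 ≤ ρ)
    (hr : 1 ≤ r) :
    ‖oscCoeffDeriv η ρ r‖ ≤ 300 * π * exp ρ / r ^ 3 * min 1 (1 / (η * r)) := by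
  have hr₀ : 0 < r := one_pos.trans_le hr
  have hm := min_one_one_div_sq_le (mul_pos hη₀ hr₀)
  have hsinh : ‖(-(sinh ρ : ℂ) / 2)‖ ≤ exp ρ / 2 := by
    rw [norm_div, norm_neg, Complex.norm_real, Complex.norm_two, ← cosh_add_sinh,
      Real.norm_of_nonneg (sinh_nonneg_iff.2 hρ)]
    linarith [one_le_cosh ρ]
  rw [oscCoeffDeriv]
  refine (norm_add_le _ _).trans ?_
  rw [norm_mul, norm_mul, Complex.norm_real, Complex.norm_real, Real.norm_eq_abs,
    Real.norm_eq_abs]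
  calc _ ≤ 528 * π / r ^ 4 * min 1 (1 / (η * r)) * (r * exp ρ / 2)
          + 72 * π / r ^ 3 * min 1 (1 / (η * r) ^ 2) * (exp ρ / 2) := by
        gcongr
        exacts [abs_envelopeDeriv_le hη₀ hη₁ hr, norm_amplitude_le hρ hr,
          abs_envelope_le hη₀ hη₁ hr]
    _ ≤ 528 * π / r ^ 4 * min 1 (1 / (η * r)) * (r * exp ρ / 2)
          + 72 * π / r ^ 3 * min 1 (1 / (η * r)) * (exp ρ / 2) := by gcongr
    _ = _ := by field_simp; ring

lemma ofReal_hPM_eq {R η s r : ℝ} (hr : r ≠ 0) :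
    (hPM R η s r : ℂ)
      = oscCoeff η (R + s * η) r * Complex.exp (Complex.I * r * (R + s * η))
        + (starRingEnd ℂ) (oscCoeff η (R + s * η) r)
          * Complex.exp (-(Complex.I * r * (R + s * η))) := by
  have h := ofReal_sin_mul_cosh_sub_eq (R + s * η) r
  rw [Complex.ofReal_add, Complex.ofReal_mul] at h
  rw [hPM, show π * (sinh (2 * η) - 2 * η) = ballVolume η from rfl, hSel_mul_hSel_div_eq hr,
    Complex.ofReal_mul, h, oscCoeff, map_mul, Complex.conj_ofReal]
  ring

/-- For `r ≥ 1` one can write `h_±(r) = A(r) e^{ir(R±η)} + B(r) e^{−ir(R±η)}` with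
continuously differentiable coefficients satisfying
`|A|, |B| ≤ C e^R r^{−2} min{1, (ηr)^{−2}}` and
`|A′|, |B′| ≤ C e^R r^{−3} min{1, (ηr)^{−1}}`, uniformly in `R ≥ 1`, `η ∈ (0,1)`. -/
theorem hPM_oscillatory_decomposition :
    ∃ C : ℝ, 0 < C ∧ ∀ R : ℝ, 1 ≤ R → ∀ η : ℝ, 0 < η → η < 1 →
      ∀ s : ℝ, (s = 1 ∨ s = -1) →
        ∃ A B A' B' : ℝ → ℂ,
          (∀ r : ℝ, 1 ≤ r → HasDerivAt A (A' r) r ∧ HasDerivAt B (B' r) r) ∧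
          ContinuousOn A' (Set.Ici 1) ∧ ContinuousOn B' (Set.Ici 1) ∧
          ∀ r : ℝ, 1 ≤ r →
            ((hPM R η s r : ℂ)
                = A r * Complex.exp (Complex.I * r * (R + s * η))
                  + B r * Complex.exp (-(Complex.I * r * (R + s * η)))) ∧
            ‖A r‖ ≤ C * Real.exp R / r ^ 2 * min 1 (1 / (η * r) ^ 2) ∧
            ‖B r‖ ≤ C * Real.exp R / r ^ 2 * min 1 (1 / (η * r) ^ 2) ∧
            ‖A' r‖ ≤ C * Real.exp R / r ^ 3 * min 1 (1 / (η * r)) ∧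
            ‖B' r‖ ≤ C * Real.exp R / r ^ 3 * min 1 (1 / (η * r)) := by
  refine ⟨900 * π, by positivity, fun R hR η hη₀ hη₁ s hs ↦ ?_⟩
  have hρ : 0 ≤ R + s * η ∧ R + s * η ≤ R + 1 := by
    rcases hs with rfl | rfl <;> constructor <;> linarith
  have hexp : exp (R + s * η) ≤ 3 * exp R := by
    calc exp (R + s * η) ≤ exp R * exp 1 := by rw [← exp_add]; exact exp_le_exp.2 hρ.2
      _ ≤ 3 * exp R := by nlinarith [exp_one_lt_d9, exp_pos R]
  have hC : ∀ {c : ℝ} (k : ℕ) {r m : ℝ}, c ≤ 300 → 0 < r → 0 ≤ m →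
      c * π * exp (R + s * η) / r ^ k * m ≤ 900 * π * exp R / r ^ k * m := fun k r m hc hr hm ↦ by
    gcongr ?_ / _ * _
    nlinarith [pi_pos, mul_le_mul hc hexp (exp_pos _).le (by norm_num : (0 : ℝ) ≤ 300)]
  have hcont : ContinuousOn (oscCoeffDeriv η (R + s * η)) (Ici 1) :=
    (continuousOn_oscCoeffDeriv η _).mono fun r hr ↦ (one_pos.trans_le hr).ne'
  refine ⟨oscCoeff η (R + s * η), fun r ↦ (starRingEnd ℂ) (oscCoeff η (R + s * η) r),
    oscCoeffDeriv η (R + s * η), fun r ↦ (starRingEnd ℂ) (oscCoeffDeriv η (R + s * η) r),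
    fun r hr ↦ ?_, hcont, Complex.continuous_conj.comp_continuousOn hcont, fun r hr ↦ ?_⟩
  · have hA := hasDerivAt_oscCoeff η (R + s * η) (one_pos.trans_le hr).ne'
    exact ⟨hA, hA.star⟩
  have hr₀ : 0 < r := one_pos.trans_le hr
  have hA := (norm_oscCoeff_le hη₀ hη₁.le hρ.1 hr).trans
    (hC 2 (by norm_num) hr₀ (by positivity))
  have hA' := (norm_oscCoeffDeriv_le hη₀ hη₁.le hρ.1 hr).trans
    (hC 3 le_rfl hr₀ (by positivity))
  exact ⟨ofReal_hPM_eq hr₀.ne', hA, by rwa [Complex.norm_conj], hA',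
    by rwa [Complex.norm_conj]⟩
end

section
/- For every real R > 0, there exists an entire function g : ℂ → ℂ such that g(r) = 2π·sinh(R(1+ir))/(ir(1+ir)) − 2π·sinh(R(1−ir))/(ir(1−ir)) for all complex r ∉ {0, i, −i}; moreover g(0) = 4π(R·cosh(R) − sinh(R)) and g(i) = g(−i) = π(sinh(2R) − 2R). -/
/-!
The function `S w = sinh (R w) / w` has a removable singularity at `0`, so it is entire.
Writing `z = i r`, the partial fractions `1 / (z (1 ± z)) = 1 / z ∓ 1 / (1 ± z)` and the addition
formula `sinh (R (1 + z)) - sinh (R (1 - z)) = 2 cosh R sinh (R z)` turn the closed form into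
`2 cosh R · S z - S (1 + z) - S (1 - z)`, an entire function of `z`, whose values at
`z = 0` and `z = ∓ 1` are the stated ones.
-/

open Complex

noncomputable section

namespace Selberg

def sinhSlope (R : ℂ) : ℂ → ℂ := dslope (fun w => sinh (R * w)) 0

theorem differentiable_sinhSlope (R : ℂ) : Differentiable ℂ (sinhSlope R) := by
  rw [← differentiableOn_univ, sinhSlope, differentiableOn_dslope Filter.univ_mem,
    differentiableOn_univ]
  fun_prop

theorem sinhSlope_of_ne_zero (R : ℂ) {w : ℂ} (hw : w ≠ 0) : sinhSlope R w = sinh (R * w) / w := by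
  rw [sinhSlope, dslope_of_ne _ hw, slope_def_field]
  simp

theorem sinhSlope_zero (R : ℂ) : sinhSlope R 0 = R := by
  have h : HasDerivAt (fun w => sinh (R * w)) (cosh (R * 0) * R) 0 :=
    (hasDerivAt_sinh _).comp 0 (by simpa using (hasDerivAt_id (0 : ℂ)).const_mul R)
  simpa [sinhSlope, dslope_same] using h.deriv

theorem sinhSlope_neg (R w : ℂ) : sinhSlope R (-w) = sinhSlope R w := by
  rcases eq_or_ne w 0 with rfl | hw
  · rw [neg_zero]
  · rw [sinhSlope_of_ne_zero R hw, sinhSlope_of_ne_zero R (neg_ne_zero.mpr hw), mul_neg, sinh_neg,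
      neg_div_neg_eq]

/-- The entire extension, in the variable `z = i r`. -/
def selbergEntire (R z : ℂ) : ℂ :=
  2 * cosh R * sinhSlope R z - sinhSlope R (1 + z) - sinhSlope R (1 - z)

theorem differentiable_selbergEntire (R : ℂ) : Differentiable ℂ (selbergEntire R) := by
  have hS := differentiable_sinhSlope R
  unfold selbergEntire
  fun_prop

theorem selbergEntire_eq_of_ne {R z : ℂ} (h₀ : z ≠ 0) (h₁ : 1 + z ≠ 0) (h₂ : 1 - z ≠ 0) :
    sinh (R * (1 + z)) / (z * (1 + z)) - sinh (R * (1 - z)) / (z * (1 - z)) =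
      selbergEntire R z := by
  rw [selbergEntire, sinhSlope_of_ne_zero R h₀, sinhSlope_of_ne_zero R h₁,
    sinhSlope_of_ne_zero R h₂, mul_add, mul_sub, mul_one, sinh_add, sinh_sub]
  field_simp
  ring

theorem selbergEntire_neg (R z : ℂ) : selbergEntire R (-z) = selbergEntire R z := by
  rw [selbergEntire, selbergEntire, sinhSlope_neg, sub_neg_eq_add, ← sub_eq_add_neg]
  ring

theorem selbergEntire_zero (R : ℂ) : selbergEntire R 0 = 2 * (R * cosh R - sinh R) := by
  rw [selbergEntire, add_zero, sub_zero, sinhSlope_zero, sinhSlope_of_ne_zero R one_ne_zero]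
  ring_nf

theorem selbergEntire_one (R : ℂ) : selbergEntire R 1 = sinh (2 * R) / 2 - R := by
  rw [selbergEntire, sub_self, sinhSlope_zero, sinhSlope_of_ne_zero R one_ne_zero,
    one_add_one_eq_two, sinhSlope_of_ne_zero R two_ne_zero, mul_comm R 2, sinh_two_mul]
  field_simp
  ring

end Selberg

end

open Selberg in
theorem selberg_transform_entire_extension_general (R : ℝ) :
    ∃ g : ℂ → ℂ, Differentiable ℂ g ∧
      (∀ r : ℂ, r ≠ 0 → r ≠ Complex.I → r ≠ -Complex.I →
        g r = 2 * (Real.pi : ℂ) * Complex.sinh ((R : ℂ) * (1 + Complex.I * r)) /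
                (Complex.I * r * (1 + Complex.I * r))
              - 2 * (Real.pi : ℂ) * Complex.sinh ((R : ℂ) * (1 - Complex.I * r)) /
                (Complex.I * r * (1 - Complex.I * r))) ∧
      g 0 = ((4 * Real.pi * (R * Real.cosh R - Real.sinh R) : ℝ) : ℂ) ∧
      g Complex.I = ((Real.pi * (Real.sinh (2 * R) - 2 * R) : ℝ) : ℂ) ∧
      g (-Complex.I) = ((Real.pi * (Real.sinh (2 * R) - 2 * R) : ℝ) : ℂ) := by
  have h_one : 2 * (Real.pi : ℂ) * selbergEntire R 1 =
      ((Real.pi * (Real.sinh (2 * R) - 2 * R) : ℝ) : ℂ) := by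
    rw [selbergEntire_one]
    push_cast
    ring
  refine ⟨fun r => 2 * Real.pi * selbergEntire R (I * r), ?_, fun r h₀ hI hnegI => ?_, ?_,
    ?_, ?_⟩
  · exact (differentiable_selbergEntire R).comp (differentiable_id.const_mul I) |>.const_mul _
  · have h₁ : 1 + I * r ≠ 0 := fun h => hI (by linear_combination (-I) * h + r * I_mul_I)
    have h₂ : 1 - I * r ≠ 0 := fun h => hnegI (by linear_combination I * h + r * I_mul_I)
    rw [mul_div_assoc, mul_div_assoc, ← mul_sub,
      selbergEntire_eq_of_ne (mul_ne_zero I_ne_zero h₀) h₁ h₂]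
  · simp only [mul_zero, selbergEntire_zero]
    push_cast
    ring
  · simpa only [I_mul_I, selbergEntire_neg] using h_one
  · simpa only [mul_neg, I_mul_I, neg_neg] using h_one

/-- For `R > 0`, the closed-form Selberg transform extends to an entire function `g`
with `g(0) = 4π(R cosh R − sinh R)` and `g(±i) = π(sinh(2R) − 2R)`. -/
theorem selberg_transform_entire_extension (R : ℝ) (hR : 0 < R) :
    ∃ g : ℂ → ℂ, Differentiable ℂ g ∧
      (∀ r : ℂ, r ≠ 0 → r ≠ Complex.I → r ≠ -Complex.I →
        g r = 2 * (Real.pi : ℂ) * Complex.sinh ((R : ℂ) * (1 + Complex.I * r)) /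
                (Complex.I * r * (1 + Complex.I * r))
              - 2 * (Real.pi : ℂ) * Complex.sinh ((R : ℂ) * (1 - Complex.I * r)) /
                (Complex.I * r * (1 - Complex.I * r))) ∧
      g 0 = ((4 * Real.pi * (R * Real.cosh R - Real.sinh R) : ℝ) : ℂ) ∧
      g Complex.I = ((Real.pi * (Real.sinh (2 * R) - 2 * R) : ℝ) : ℂ) ∧
      g (-Complex.I) = ((Real.pi * (Real.sinh (2 * R) - 2 * R) : ℝ) : ℂ) :=
  selberg_transform_entire_extension_general R
end
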